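/- If μ₁ < μ₂ < μ₃ < μ₄ are four real numbers forming a 'harmonic' configuration in the isoparametric sense of Münzner, namely μ_k = cot(θ + (k−1)π/4) for some θ ∈ (0, π/4), then the cross-ratio ψ = ((μ₁ − μ₂)(μ₄ − μ₃))/((μ₁ − μ₃)(μ₄ − μ₂)) equals 1/2. -/

import Mathlib

open Real

/-- For the Münzner configuration `μ_k = cot(θ + (k-1)π/4)`, `θ ∈ (0, π/4)`, of the four
principal curvatures of an isoparametric hypersurface with `g = 4`, the Lie curvature
(cross-ratio) `ψ = ((μ₁ - μ₂)(μ₄ - μ₃))/((μ₁ - μ₃)(μ₄ - μ₂))` equals `1/2`. -/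
theorem stmt14 (θ : ℝ) (hθ : θ ∈ Set.Ioo 0 (π / 4)) (μ₁ μ₂ μ₃ μ₄ : ℝ)
    (h₁ : μ₁ = Real.cot θ) (h₂ : μ₂ = Real.cot (θ + π / 4))
    (h₃ : μ₃ = Real.cot (θ + 2 * (π / 4))) (h₄ : μ₄ = Real.cot (θ + 3 * (π / 4))) :
    ((μ₁ - μ₂) * (μ₄ - μ₃)) / ((μ₁ - μ₃) * (μ₄ - μ₂)) = 1 / 2 := by
  obtain ⟨h0, h4⟩ := hθ
  have hpi := Real.pi_pos
  set s := Real.sin θ with hsdef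
  set c := Real.cos θ with hcdef
  have hs : 0 < s := Real.sin_pos_of_pos_of_lt_pi h0 (by linarith)
  have hc : 0 < c := Real.cos_pos_of_mem_Ioo ⟨by linarith, by linarith⟩
  have h2 : (0:ℝ) < Real.sqrt 2 := by positivity
  have hcs : s < c := by
    have h := Real.cos_pos_of_mem_Ioo
      (show θ + π/4 ∈ Set.Ioo (-(π/2)) (π/2) from ⟨by linarith, by linarith⟩)
    rw [Real.cos_add, Real.cos_pi_div_four, Real.sin_pi_div_four] at h
    nlinarith
  have pyth : s ^ 2 + c ^ 2 = 1 := Real.sin_sq_add_cos_sq θ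
  have e2 : Real.cot (θ + π / 4) = (c - s) / (c + s) := by
    rw [Real.cot_eq_cos_div_sin, Real.cos_add, Real.sin_add, Real.cos_pi_div_four,
      Real.sin_pi_div_four, div_eq_div_iff (by nlinarith) (by nlinarith)]
    ring
  have e3 : Real.cot (θ + 2 * (π / 4)) = -s / c := by
    rw [show θ + 2 * (π / 4) = θ + π / 2 by ring, Real.cot_eq_cos_div_sin, Real.cos_add,
      Real.sin_add, Real.cos_pi_div_two, Real.sin_pi_div_two]
    rw [div_eq_div_iff (by nlinarith) (by nlinarith)]
    ring
  have e4 : Real.cot (θ + 3 * (π / 4)) = -(c + s) / (c - s) := by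
    rw [show θ + 3 * (π / 4) = θ + (π - π / 4) by ring, Real.cot_eq_cos_div_sin, Real.cos_add,
      Real.sin_add, Real.cos_pi_sub, Real.sin_pi_sub, Real.cos_pi_div_four,
      Real.sin_pi_div_four]
    rw [div_eq_div_iff (by nlinarith) (by nlinarith)]
    ring
  have e1 : Real.cot θ = c / s := Real.cot_eq_cos_div_sin θ
  subst h₁ h₂ h₃ h₄
  rw [e1, e2, e3, e4]
  have hcs' : c - s ≠ 0 := by linarith
  have hcs'' : c + s ≠ 0 := by linarith
  have d1 : c / s - (c - s) / (c + s) = 1 / (s * (c + s)) := by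
    rw [div_sub_div _ _ hs.ne' hcs'', div_eq_div_iff (by positivity) (by positivity)]
    linear_combination (s * (c + s)) * pyth
  have d2 : -(c + s) / (c - s) - -s / c = -1 / (c * (c - s)) := by
    rw [div_sub_div _ _ hcs' hc.ne', div_eq_div_iff (by positivity) (by positivity)]
    linear_combination (-(c * (c - s))) * pyth
  have d3 : c / s - -s / c = 1 / (s * c) := by
    rw [div_sub_div _ _ hs.ne' hc.ne', div_eq_div_iff (by positivity) (by positivity)]
    linear_combination (s * c) * pyth
  have d4 : -(c + s) / (c - s) - (c - s) / (c + s) = -2 / ((c + s) * (c - s)) := by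
    rw [div_sub_div _ _ hcs' hcs'', div_eq_div_iff (by positivity) (by positivity)]
    linear_combination (-2 * ((c + s) * (c - s))) * pyth
  rw [d1, d2, d3, d4]
  field_simp
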